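/- arXiv:2602.05685 — 8 statements merged into one kernel-verified Lean document; each statement's English description precedes it below -/
import Mathlib

section
/- Let h : P → Q be a homomorphism of integral saturated monoids. If every valuation of P extends to a valuation of Q, then h is exact. (Here a valuation g : Q → W extends a valuation f : P → V if there is a local homomorphism V → W with g∘h-compatible commuting square.) -/
/-- A valuative monoid: a submonoid `V` of its Grothendieck group `K` such that
for every `v ∈ K = V^gp`, either `v ∈ V` or `-v ∈ V` (total preorder).  Such a
monoid is automatically integral and saturated. -/
structure ValMonoid where
  K : Type
  [grp : AddCommGroup K]
  V : AddSubmonoid K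
  total : ∀ v : K, v ∈ V ∨ -v ∈ V

attribute [instance] ValMonoid.grp

section Aux
variable {G : Type*} [AddCommGroup G]

/-- Saturation of an additive submonoid in an abelian group. -/
def satur (M : AddSubmonoid G) : AddSubmonoid G where
  carrier := {y | ∃ n : ℕ, 1 ≤ n ∧ n • y ∈ M}
  zero_mem' := ⟨1, le_refl _, by simpa using M.zero_mem⟩
  add_mem' := by
    rintro a b ⟨n, hn, ha⟩ ⟨m, hm, hb⟩
    refine ⟨n * m, Nat.one_le_iff_ne_zero.2 (by positivity), ?_⟩
    rw [smul_add]
    have h1 : (n * m) • a = m • (n • a) := by rw [mul_comm, mul_smul]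
    have h2 : (n * m) • b = n • (m • b) := by rw [mul_smul]
    rw [h1, h2]
    exact add_mem (AddSubmonoid.nsmul_mem _ ha m) (AddSubmonoid.nsmul_mem _ hb n)

lemma exists_valuative (P : AddSubmonoid G)
    (hPsat : ∀ (n : ℕ) (x : G), 1 ≤ n → n • x ∈ P → x ∈ P) {x : G} (hx : x ∉ P) :
    ∃ V : AddSubmonoid G, P ≤ V ∧ x ∉ V ∧ ∀ v : G, v ∈ V ∨ -v ∈ V := by
  let S : Set (AddSubmonoid G) :=
    {V | P ≤ V ∧ x ∉ V ∧ ∀ (n : ℕ) (y : G), 1 ≤ n → n • y ∈ V → y ∈ V}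
  have hPS : P ∈ S := ⟨le_refl _, hx, hPsat⟩
  have hzorn : ∀ c ⊆ S, IsChain (· ≤ ·) c → ∀ y ∈ c, ∃ ub ∈ S, ∀ z ∈ c, z ≤ ub := by
    intro c hcS hchain y hy
    refine ⟨⨆ W : c, (W : AddSubmonoid G), ?_, fun z hz => le_iSup (fun W : c => (W : AddSubmonoid G)) ⟨z, hz⟩⟩
    haveI : Nonempty c := ⟨⟨y, hy⟩⟩
    have hdir : Directed (· ≤ ·) (fun W : c => (W : AddSubmonoid G)) :=
      hchain.directedOn.directed_val
    have hmem : ∀ z : G, z ∈ (⨆ W : c, (W : AddSubmonoid G)) ↔ ∃ W : c, z ∈ (W : AddSubmonoid G) :=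
      fun z => AddSubmonoid.mem_iSup_of_directed hdir
    refine ⟨?_, ?_, ?_⟩
    · intro z hz
      exact (hmem z).2 ⟨⟨y, hy⟩, (hcS hy).1 hz⟩
    · intro hxm
      obtain ⟨W, hW⟩ := (hmem x).1 hxm
      exact (hcS W.2).2.1 hW
    · intro n z hn hz
      obtain ⟨W, hW⟩ := (hmem _).1 hz
      exact (hmem z).2 ⟨W, (hcS W.2).2.2 n z hn hW⟩
  obtain ⟨V, hPleV, hmax⟩ := zorn_le_nonempty₀ S hzorn P hPS
  · obtain ⟨hPV, hxV, hVsat⟩ := hmax.1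
    refine ⟨V, hPV, hxV, ?_⟩
    by_contra hc
    push_neg at hc
    obtain ⟨v, hv1, hv2⟩ := hc
    -- helper: for any w ∉ V, x ∈ satur (V ⊔ closure {w})
    have key : ∀ w : G, w ∉ V → ∃ n : ℕ, 1 ≤ n ∧ ∃ a ∈ V, ∃ k : ℕ, n • x = a + k • w := by
      intro w hw
      by_contra hns
      push_neg at hns
      set V' := satur (V ⊔ AddSubmonoid.closure {w}) with hV'
      have hVV' : V ≤ V' := by
        intro z hz
        exact ⟨1, le_refl _, by simpa using AddSubmonoid.mem_sup_left hz⟩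
      have hwV' : w ∈ V' :=
        ⟨1, le_refl _, by simpa using AddSubmonoid.mem_sup_right (AddSubmonoid.mem_closure_singleton.2 ⟨1, one_nsmul w⟩)⟩
      have hxV' : x ∉ V' := by
        rintro ⟨n, hn, hnx⟩
        rw [AddSubmonoid.mem_sup] at hnx
        obtain ⟨a, ha, b, hb, hab⟩ := hnx
        rw [AddSubmonoid.mem_closure_singleton] at hb
        obtain ⟨k, hk⟩ := hb
        exact hns n hn a ha k (by rw [← hab, hk])
      have hV'S : V' ∈ S := by
        refine ⟨le_trans hPV hVV', hxV', ?_⟩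
        rintro n y hn ⟨m, hm, hmy⟩
        rw [← mul_smul] at hmy
        exact ⟨m * n, Nat.one_le_iff_ne_zero.2 (by positivity), hmy⟩
      exact hw (hmax.2 hV'S hVV' hwV')
    obtain ⟨n, hn, a, ha, k, hnk⟩ := key v hv1
    obtain ⟨m, hm, b, hb, l, hml⟩ := key (-v) hv2
    have hsum : (l * n + k * m) • x = l • a + k • b := by
      have e1 : l • (n • x) = l • a + (l * k) • v := by
        rw [hnk, smul_add, ← mul_smul]
      have e2 : k • (m • x) = k • b - (k * l) • v := by
        rw [hml, smul_add, ← mul_smul, smul_neg, sub_eq_add_neg]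
      rw [add_smul, mul_smul, mul_smul, e1, e2]
      rw [mul_comm l k]
      abel
    have hmemV : (l * n + k * m) • x ∈ V := hsum ▸ add_mem (AddSubmonoid.nsmul_mem _ ha l) (AddSubmonoid.nsmul_mem _ hb k)
    rcases Nat.eq_zero_or_pos (l * n + k * m) with h0 | hpos
    · have hl : l = 0 := by
        have := Nat.add_eq_zero.1 h0
        rcases Nat.mul_eq_zero.1 this.1 with h | h
        · exact h
        · omega
      have hk : k = 0 := by
        have := Nat.add_eq_zero.1 h0
        rcases Nat.mul_eq_zero.1 this.2 with h | h
        · exact h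
        · omega
      subst hl hk
      simp at hnk
      exact hxV (hVsat n x hn (hnk ▸ ha))
    · exact hxV (hVsat _ x hpos hmemV)

end Aux

/-- Let `h : P → Q` be a homomorphism of integral saturated
monoids (modeled as submonoids of their Grothendieck groups `G`, `H`).  If
every valuation of `P` extends to a valuation of `Q` (via a local homomorphism
of valuative monoids making the square commute), then `h` is exact. -/
theorem stmt_4 {G H : Type} [AddCommGroup G] [AddCommGroup H]
    (P : AddSubmonoid G) (Q : AddSubmonoid H) (h : G →+ H)
    (hPQ : ∀ x ∈ P, h x ∈ Q)
    (hGgen : ∀ x : G, ∃ a ∈ P, ∃ b ∈ P, x = a - b)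
    (hHgen : ∀ y : H, ∃ a ∈ Q, ∃ b ∈ Q, y = a - b)
    (hPsat : ∀ (n : ℕ) (x : G), 1 ≤ n → n • x ∈ P → x ∈ P)
    (hQsat : ∀ (n : ℕ) (y : H), 1 ≤ n → n • y ∈ Q → y ∈ Q)
    (hext : ∀ (W : ValMonoid) (f : G →+ W.K), (∀ x ∈ P, f x ∈ W.V) →
      ∃ (W' : ValMonoid) (g : H →+ W'.K) (ℓ : W.K →+ W'.K),
        (∀ y ∈ Q, g y ∈ W'.V) ∧ (∀ v ∈ W.V, ℓ v ∈ W'.V) ∧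
        (∀ v : W.K, (ℓ v ∈ W'.V ∧ -(ℓ v) ∈ W'.V) ↔ (v ∈ W.V ∧ -v ∈ W.V)) ∧
        g.comp h = ℓ.comp f) :
    ∀ x : G, h x ∈ Q → x ∈ P := by
  intro x hxQ
  by_contra hx
  obtain ⟨V, hPV, hxV, htot⟩ := exists_valuative P hPsat hx
  obtain ⟨W', g, ℓ, h1, h2, h3, h4⟩ :=
    hext { K := G, V := V, total := htot } (AddMonoidHom.id G) (fun p hp => hPV hp)
  have hc : g (h x) = ℓ x := DFunLike.congr_fun h4 x
  have hmx : -x ∈ V := (htot x).resolve_left hxV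
  have e1 : ℓ x ∈ W'.V := hc ▸ h1 _ hxQ
  have e2 : -(ℓ x) ∈ W'.V := by rw [← map_neg]; exact h2 _ hmx
  exact hxV ((h3 x).1 ⟨e1, e2⟩).1
end

section
/- Let h : P → Q be a homomorphism of finitely generated, integral, saturated, sharp monoids, and let φ : σ_Q → σ_P be the dual map of real cones, where σ_P = Hom(P, ℝ≥0). Then h is exact if and only if φ is surjective. -/
/-!
Both groups are finitely generated and, by sharpness and saturation, torsion-free, hence free; their
homomorphisms to `ℚ` serve as coordinates.

If `h` is not exact, some `x ∉ P` has `h x ∈ Q`. By saturation no multiple `N • x` is a natural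
combination of generators of `P`, so Farkas' lemma over `ℚ` gives `f ≥ 0` on `P` with `f x < 0`,
and then `f = g ∘ h` with `g ≥ 0` on `Q` is impossible.

Conversely, if `f ≥ 0` on `P` does not factor as such a `g ∘ h`, Farkas' lemma over `ℝ` gives
nonnegative real coefficients `a, b, m` with `h (∑ (b - a) • p) = ∑ m • q` and
`f (∑ (b - a) • p) < 0`. A nonnegative real solution of a rational linear system that pairs
positively with a real vector can be replaced by a rational one (Gordan's alternative and induction
on the support), hence by a natural one; then `x = ∑ (b - a) • p` has `h x ∈ Q`, so `x ∈ P` by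
exactness, while `f x < 0`.
-/

section Farkas

variable {K V ι : Type*} [Field K] [LinearOrder K] [IsStrictOrderedRing K]
  [AddCommGroup V] [Module K V] [Fintype ι]

theorem farkas_alternative (s : ι → V) (v : V) (S : Finset ι) :
    (∃ c : ι → K, (∀ i, 0 ≤ c i) ∧ (∀ i ∉ S, c i = 0) ∧ ∑ i, c i • s i = v) ∨
      ∃ f : V →ₗ[K] K, (∀ i ∈ S, 0 ≤ f (s i)) ∧ f v < 0 := by
  classical
  induction S using Finset.induction_on generalizing s v with
  | empty =>
    by_cases hv : v = 0
    · exact Or.inl ⟨0, fun _ => le_rfl, fun _ _ => rfl, by simp [hv]⟩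
    · obtain ⟨f, hf⟩ : ∃ f : Module.Dual K V, f v ≠ 0 := by
        by_contra! h
        exact hv ((Module.forall_dual_apply_eq_zero_iff K v).1 h)
      exact Or.inr ⟨-(f v)⁻¹ • f, by simp, by simp [hf]⟩
  | insert a S ha ih =>
    rcases ih s v with ⟨c, hc, hcS, hcv⟩ | ⟨f, hf, hfv⟩
    · exact Or.inl ⟨c, hc, fun i hi => hcS i (by simp_all), hcv⟩
    by_cases hfa : 0 ≤ f (s a)
    · exact Or.inr ⟨f, Finset.forall_mem_insert _ _ _ |>.2 ⟨hfa, hf⟩, hfv⟩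
    rw [not_le] at hfa
    -- Project along `s a` onto `ker f` and recurse.
    set π : V →ₗ[K] V := LinearMap.id - (f (s a))⁻¹ • f.smulRight (s a)
    have hπ : ∀ x, π x = x - (f x / f (s a)) • s a := fun x => by
      simp [π, div_eq_inv_mul, mul_smul]
    rcases ih (π ∘ s) (π v) with ⟨c, hc, hcS, hcv⟩ | ⟨g, hg, hgv⟩
    · set x := ∑ i, c i • s i
      have hfx : 0 ≤ f x := by
        simp only [x, map_sum, map_smul, smul_eq_mul]
        refine Finset.sum_nonneg fun i _ => ?_
        by_cases hi : i ∈ S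
        · exact mul_nonneg (hc i) (hf i hi)
        · simp [hcS i hi]
      have hμ : 0 ≤ (f v - f x) / f (s a) := div_nonneg_of_nonpos (by linarith) hfa.le
      refine Or.inl ⟨c + Pi.single a ((f v - f x) / f (s a)), fun i => ?_, fun i hi => ?_, ?_⟩
      · rw [Pi.add_apply, Pi.single_apply]
        split_ifs <;> simp [hc i, hμ, add_nonneg]
      · rw [Finset.mem_insert, not_or] at hi
        simp [hcS i hi.2, hi.1]
      · have hxv : π x = π v := by simpa [x, map_sum] using hcv
        rw [hπ, hπ] at hxv
        simp only [Pi.add_apply, add_smul, Finset.sum_add_distrib, Pi.single_apply, ite_smul,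
          zero_smul, Finset.sum_ite_eq', Finset.mem_univ, if_true]
        linear_combination (norm := module) hxv
    · refine Or.inr ⟨g ∘ₗ π, Finset.forall_mem_insert _ _ _ |>.2 ⟨?_, hg⟩, hgv⟩
      simp [hπ, div_self hfa.ne]

end Farkas

/-- The rational functionals on `M` as coordinates; for free `M` this embeds `M` into a
`K`-vector space. -/
def ratEval (K : Type*) [DivisionRing K] [CharZero K] (M : Type*) [AddCommGroup M] :
    M →+ (M →+ ℚ) → K :=
  AddMonoidHom.pi fun ℓ => (Rat.castHom K : ℚ →+ K).comp ℓ

@[simp]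
lemma ratEval_apply {K M : Type*} [DivisionRing K] [CharZero K] [AddCommGroup M] (x : M)
    (ℓ : M →+ ℚ) : ratEval K M x ℓ = ℓ x :=
  rfl

section Rationality

variable {M τ : Type*} [AddCommGroup M] [Fintype τ]

lemma eq_zero_of_forall_addMonoidHom_rat [Module.Free ℤ M] {x : M}
    (hx : ∀ ℓ : M →+ ℚ, ℓ x = 0) : x = 0 :=
  (Module.forall_dual_apply_eq_zero_iff ℤ x).1 fun φ => by
    simpa using hx ((Int.castAddHom ℚ).comp φ.toAddMonoidHom)

lemma exists_common_denominator (w : τ → ℚ) (hw : ∀ r, 0 ≤ w r) :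
    ∃ N : ℕ, 0 < N ∧ ∃ a : τ → ℕ, ∀ r, (a r : ℚ) = N * w r := by
  classical
  refine ⟨∏ r, (w r).den, Finset.prod_pos fun r _ => (w r).pos, ?_⟩
  have key : ∀ r, ∃ a : ℕ, (a : ℚ) = (∏ r, (w r).den : ℕ) * w r := fun r => by
    obtain ⟨k, hk⟩ := Finset.dvd_prod_of_mem (fun r => (w r).den) (Finset.mem_univ r)
    have hnum : ((w r).num.toNat : ℚ) = (w r).num := by
      exact_mod_cast Int.toNat_of_nonneg (Rat.num_nonneg.2 (hw r))
    refine ⟨k * (w r).num.toNat, ?_⟩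
    rw [Nat.cast_mul, hnum, hk, Nat.cast_mul, ← Rat.mul_den_eq_num]
    ring
  choose a ha using key
  exact ⟨a, ha⟩

lemma exists_sub_mul_nonneg_support_ssubset (c w : τ → ℝ) (hc : ∀ r, 0 ≤ c r)
    (hw : ∀ r, 0 ≤ w r) (hwc : ∀ r, c r = 0 → w r = 0) {r₀ : τ} (hr₀ : 0 < w r₀) :
    ∃ t : ℝ, 0 ≤ t ∧ (∀ r, 0 ≤ c r - t * w r) ∧
      Function.support (fun r => c r - t * w r) ⊂ Function.support c := by
  classical
  obtain ⟨r₁, hr₁, hmin⟩ :=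
    Finset.exists_min_image {r | 0 < w r} (fun r => c r / w r) ⟨r₀, by simpa using hr₀⟩
  rw [Finset.mem_filter_univ] at hr₁
  have hle : ∀ r, c r₁ / w r₁ * w r ≤ c r := fun r => by
    rcases (hw r).lt_or_eq with hr | hr
    · exact (le_div_iff₀ hr).1 (hmin r (by simpa using hr))
    · rw [← hr, mul_zero]
      exact hc r
  refine ⟨c r₁ / w r₁, div_nonneg (hc r₁) (hw r₁), fun r => sub_nonneg.2 (hle r), ?_⟩
  refine (Set.ssubset_iff_of_subset fun r hr => ?_).2 ⟨r₁, ?_, ?_⟩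
  · contrapose! hr
    simp_all
  · exact fun h => hr₁.ne' (hwc r₁ h)
  · simp [div_mul_cancel₀ _ hr₁.ne']

/-- Gordan's alternative, with real coefficients tested against rational functionals. -/
lemma exists_rat_relation_of_real_relation (u : τ → M) (c : τ → ℝ) (hc : ∀ r, 0 ≤ c r)
    {r₀ : τ} (hr₀ : 0 < c r₀) (hcu : ∀ ℓ : M →+ ℚ, ∑ r, c r * ℓ (u r) = 0) :
    ∃ w : τ → ℚ, (∀ r, 0 ≤ w r) ∧ (∀ r, c r = 0 → w r = 0) ∧ 0 < w r₀ ∧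
      ∀ ℓ : M →+ ℚ, ∑ r, w r * ℓ (u r) = 0 := by
  classical
  rcases farkas_alternative (K := ℚ) (ratEval ℚ M ∘ u) (-ratEval ℚ M (u r₀)) {r | 0 < c r} with
    ⟨q, hq, hqS, hqu⟩ | ⟨F, hF, hFr₀⟩
  · refine ⟨q + Pi.single r₀ 1, fun r => add_nonneg (hq r) ?_, fun r hr => ?_, ?_, fun ℓ => ?_⟩
    · rw [Pi.single_apply]; split_ifs <;> norm_num
    · have hne : r ≠ r₀ := by rintro rfl; exact hr₀.ne' hr
      simp [hqS r (by simp [hr]), hne]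
    · simpa using add_pos_of_nonneg_of_pos (hq r₀) one_pos
    · have := congrFun hqu ℓ
      simp only [Finset.sum_apply, Pi.smul_apply, Function.comp_apply, ratEval_apply,
        smul_eq_mul, Pi.neg_apply, Rat.cast_id] at this
      simp [add_mul, Finset.sum_add_distrib, Pi.single_apply, this]
  · have hterm : ∀ r, 0 ≤ c r * (F (ratEval ℚ M (u r)) : ℝ) := fun r => by
      rcases (hc r).lt_or_eq with hr | hr
      · exact mul_nonneg hr.le (by exact_mod_cast hF r (by simpa using hr))
      · simp [← hr]
    have hr₀' : 0 < F (ratEval ℚ M (u r₀)) := by simpa using hFr₀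
    have := hcu (F.toAddMonoidHom.comp (ratEval ℚ M))
    simp only [AddMonoidHom.coe_comp, Function.comp_apply, LinearMap.toAddMonoidHom_coe] at this
    exact absurd this (Finset.sum_pos' (fun r _ => hterm r)
      ⟨r₀, Finset.mem_univ _, mul_pos hr₀ (by exact_mod_cast hr₀')⟩).ne'

theorem exists_rat_relation_pos_of_real_relation (u : τ → M) (v c : τ → ℝ) (hc : ∀ r, 0 ≤ c r)
    (hcu : ∀ ℓ : M →+ ℚ, ∑ r, c r * ℓ (u r) = 0) (hcv : 0 < ∑ r, c r * v r) :
    ∃ w : τ → ℚ, (∀ r, 0 ≤ w r) ∧ (∀ ℓ : M →+ ℚ, ∑ r, w r * ℓ (u r) = 0) ∧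
      0 < ∑ r, w r * v r := by
  induction h : (Function.support c).ncard using Nat.strong_induction_on generalizing c with
  | _ n ih =>
  obtain ⟨r₀, hr₀⟩ : ∃ r, 0 < c r := by
    by_contra! hc0
    exact hcv.not_ge (Finset.sum_nonpos fun r _ => by rw [le_antisymm (hc0 r) (hc r), zero_mul])
  obtain ⟨w, hw, hwc, hwr₀, hwu⟩ := exists_rat_relation_of_real_relation u c hc hr₀ hcu
  by_cases hwv : 0 < ∑ r, (w r : ℝ) * v r
  · exact ⟨w, hw, hwu, hwv⟩
  -- Otherwise subtract from `c` a multiple of `w`: this shrinks the support of `c` and does not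
  -- decrease the pairing with `v`.
  obtain ⟨t, ht, hct, hsupp⟩ := exists_sub_mul_nonneg_support_ssubset c (fun r => w r) hc
    (fun r => by exact_mod_cast hw r) (fun r hr => by simp [hwc r hr])
    (by exact_mod_cast hwr₀ : (0 : ℝ) < w r₀)
  refine ih _ (h ▸ Set.ncard_lt_ncard hsupp) _ hct (fun ℓ => ?_) ?_ rfl
  · have hwuℓ : ∑ r, (w r : ℝ) * ℓ (u r) = 0 := by exact_mod_cast hwu ℓ
    simp only [sub_mul, Finset.sum_sub_distrib, hcu ℓ, mul_assoc, ← Finset.mul_sum, hwuℓ]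
    simp
  · simp only [sub_mul, Finset.sum_sub_distrib, mul_assoc, ← Finset.mul_sum]
    nlinarith

theorem exists_nat_relation_pos_of_real_relation [Module.Free ℤ M] (u : τ → M) (v c : τ → ℝ)
    (hc : ∀ r, 0 ≤ c r) (hcu : ∀ ℓ : M →+ ℚ, ∑ r, c r * ℓ (u r) = 0)
    (hcv : 0 < ∑ r, c r * v r) :
    ∃ a : τ → ℕ, ∑ r, a r • u r = 0 ∧ 0 < ∑ r, (a r : ℝ) * v r := by
  obtain ⟨w, hw, hwu, hwv⟩ := exists_rat_relation_pos_of_real_relation u v c hc hcu hcv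
  obtain ⟨N, hN, a, ha⟩ := exists_common_denominator w hw
  have ha' : ∀ r, (a r : ℝ) = N * w r := fun r => by exact_mod_cast ha r
  refine ⟨a, eq_zero_of_forall_addMonoidHom_rat fun ℓ => ?_, ?_⟩
  · simp [map_sum, ha, mul_assoc, ← Finset.mul_sum, hwu ℓ]
  · simp only [ha', mul_assoc, ← Finset.mul_sum]
    exact mul_pos (Nat.cast_pos.2 hN) hwv

end Rationality

section Lattice

variable {M α β : Type*} [AddCommGroup M] [Module.Free ℤ M] [Fintype α] [Fintype β]

theorem exists_nsmul_eq_sum_nsmul_or_exists_neg (p : α → M) (x : M) :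
    (∃ N : ℕ, 0 < N ∧ ∃ a : α → ℕ, N • x = ∑ s, a s • p s) ∨
      ∃ φ : M →+ ℝ, (∀ s, 0 ≤ φ (p s)) ∧ φ x < 0 := by
  rcases farkas_alternative (K := ℚ) (ratEval ℚ M ∘ p) (ratEval ℚ M x) Finset.univ with
    ⟨c, hc, -, hcx⟩ | ⟨F, hF, hFx⟩
  · obtain ⟨N, hN, a, ha⟩ := exists_common_denominator c hc
    refine Or.inl ⟨N, hN, a, sub_eq_zero.1 (eq_zero_of_forall_addMonoidHom_rat fun ℓ => ?_)⟩
    have hℓ := congrFun hcx ℓ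
    simp only [Finset.sum_apply, Pi.smul_apply, Function.comp_apply, ratEval_apply,
      smul_eq_mul, Rat.cast_id] at hℓ
    simp [map_sum, ha, ← hℓ, Finset.mul_sum, mul_assoc]
  · refine Or.inr ⟨(Rat.castHom ℝ : ℚ →+ ℝ).comp (F.toAddMonoidHom.comp (ratEval ℚ M)),
      fun s => ?_, ?_⟩
    · simpa using hF s (Finset.mem_univ s)
    · simpa using hFx

theorem exists_addMonoidHom_eq_of_nonneg (p : α → M) (q : β → M) (y : α → ℝ)
    (hrel : ∀ (a b : α → ℕ) (m : β → ℕ), ∑ s, a s • p s = ∑ s, b s • p s + ∑ t, m t • q t →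
      ∑ s, (b s : ℝ) * y s ≤ ∑ s, (a s : ℝ) * y s) :
    ∃ φ : M →+ ℝ, (∀ s, φ (p s) = y s) ∧ ∀ t, 0 ≤ φ (q t) := by
  -- Farkas over `ℝ` for `(± p s, ± y s)` and `(q t, 0)` against `(0, 1)`: a cone representation of
  -- `(0, 1)` is a relation contradicting `hrel`, a separating `F` gives `φ = F (·, 0) / -F (0, 1)`.
  let u : α ⊕ α ⊕ β → M := Sum.elim p (Sum.elim (fun s => -p s) q)
  let v : α ⊕ α ⊕ β → ℝ := Sum.elim y (Sum.elim (fun s => -y s) 0)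
  rcases farkas_alternative (K := ℝ) (fun r => (ratEval ℝ M (u r), v r)) (0, 1) Finset.univ with
    ⟨c, hc, -, hcv⟩ | ⟨F, hF, hF1⟩
  · exfalso
    have hcu : ∀ ℓ : M →+ ℚ, ∑ r, c r * ℓ (u r) = 0 := fun ℓ => by
      simpa only [Prod.fst_sum, Prod.smul_fst, Finset.sum_apply, Pi.smul_apply, ratEval_apply,
        smul_eq_mul, Prod.fst_zero, Pi.zero_apply]
        using congrFun (congrArg Prod.fst hcv) ℓ
    have hcv' : ∑ r, c r * v r = 1 := by
      simpa only [Prod.snd_sum, Prod.smul_snd, smul_eq_mul] using congrArg Prod.snd hcv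
    obtain ⟨a, hau, hav⟩ :=
      exists_nat_relation_pos_of_real_relation u v c hc hcu (by rw [hcv']; exact one_pos)
    simp only [Fintype.sum_sum_type, u, v, Sum.elim_inl, Sum.elim_inr, smul_neg,
      Finset.sum_neg_distrib, mul_neg, Pi.zero_apply, mul_zero, Finset.sum_const_zero,
      add_zero] at hau hav
    have := hrel (a ∘ Sum.inr ∘ Sum.inl) (a ∘ Sum.inl) (a ∘ Sum.inr ∘ Sum.inr)
      (by simp only [Function.comp_apply]; linear_combination (norm := abel) -hau)
    simp only [Function.comp_apply] at this
    linarith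
  · let κ := -F (0, 1)
    have hκ : 0 < κ := neg_pos.2 hF1
    let Φ := F.comp (LinearMap.inl ℝ _ ℝ)
    have hsplit : ∀ z t, F (z, t) = Φ z - t * κ := fun z t => by
      rw [show (z, t) = (z, 0) + t • ((0 : (M →+ ℚ) → ℝ), (1 : ℝ)) by simp, map_add, map_smul]
      simp [Φ, κ]
    refine ⟨κ⁻¹ • Φ.toAddMonoidHom.comp (ratEval ℝ M), fun s => ?_, fun t => ?_⟩
    · have h₁ := hF (Sum.inl s) (Finset.mem_univ _)
      have h₂ := hF (Sum.inr (Sum.inl s)) (Finset.mem_univ _)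
      simp only [u, v, Sum.elim_inl, Sum.elim_inr, map_neg, hsplit] at h₁ h₂
      simp only [AddMonoidHom.smul_apply, AddMonoidHom.coe_comp, Function.comp_apply,
        LinearMap.toAddMonoidHom_coe, smul_eq_mul]
      field_simp
      linarith
    · have h₃ := hF (Sum.inr (Sum.inr t)) (Finset.mem_univ _)
      simp only [u, v, Sum.elim_inr, Pi.zero_apply, hsplit, zero_mul, sub_zero] at h₃
      simp only [AddMonoidHom.smul_apply, AddMonoidHom.coe_comp, Function.comp_apply,
        LinearMap.toAddMonoidHom_coe, smul_eq_mul]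
      exact mul_nonneg (inv_nonneg.2 hκ.le) h₃

end Lattice

lemma AddMonoidHom.nonneg_of_mem_closure {M R : Type*} [AddCommMonoid M] [AddCommMonoid R]
    [PartialOrder R] [IsOrderedAddMonoid R] (f : M →+ R) {S : Set M} (hS : ∀ s ∈ S, 0 ≤ f s)
    {x : M} (hx : x ∈ AddSubmonoid.closure S) : 0 ≤ f x :=
  AddSubmonoid.closure_induction hS (by simp)
    (fun _ _ _ _ h₁ h₂ => by rw [map_add]; exact add_nonneg h₁ h₂) hx

section Monoid

variable {G H : Type*} [AddCommGroup G] [AddCommGroup H]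

lemma AddSubgroup.closure_eq_top_of_forall_eq_sub {S : Set G}
    (hS : ∀ x : G, ∃ a ∈ AddSubmonoid.closure S, ∃ b ∈ AddSubmonoid.closure S, x = a - b) :
    AddSubgroup.closure S = ⊤ := by
  have hle : AddSubmonoid.closure S ≤ (AddSubgroup.closure S).toAddSubmonoid :=
    AddSubmonoid.closure_le.2 AddSubgroup.subset_closure
  refine eq_top_iff.2 fun x _ => ?_
  obtain ⟨a, ha, b, hb, rfl⟩ := hS x
  exact sub_mem (hle ha) (hle hb)

lemma isAddTorsionFree_of_sharp_of_saturated (P : AddSubmonoid G)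
    (hsharp : ∀ u ∈ P, -u ∈ P → u = 0) (hsat : ∀ (n : ℕ) (x : G), 1 ≤ n → n • x ∈ P → x ∈ P) :
    IsAddTorsionFree G := by
  refine IsAddTorsionFree.of_not_isOfFinAddOrder fun x hx hfin => hx ?_
  obtain ⟨n, hn, hnx⟩ := isOfFinAddOrder_iff_nsmul_eq_zero.1 hfin
  exact hsharp x (hsat n x hn (by rw [hnx]; exact P.zero_mem))
    (hsat n (-x) hn (by rw [smul_neg, hnx, neg_zero]; exact P.zero_mem))

theorem exists_nonneg_comp_eq_of_exact [Module.Free ℤ H] (S : Finset G) (T : Finset H)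
    (h : G →+ H) (hS : AddSubgroup.closure (S : Set G) = ⊤)
    (hexact : ∀ x, h x ∈ AddSubmonoid.closure (T : Set H) → x ∈ AddSubmonoid.closure (S : Set G))
    (f : G →+ ℝ) (hf : ∀ a ∈ AddSubmonoid.closure (S : Set G), 0 ≤ f a) :
    ∃ g : H →+ ℝ, (∀ b ∈ AddSubmonoid.closure (T : Set H), 0 ≤ g b) ∧ g.comp h = f := by
  obtain ⟨g, hgS, hgT⟩ := exists_addMonoidHom_eq_of_nonneg (fun s : S => h s) (fun t : T => (t : H))
    (fun s => f s) fun a b m habm => by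
      have hmem : ∑ s, a s • (s : G) - ∑ s, b s • (s : G) ∈ AddSubmonoid.closure (S : Set G) :=
        hexact _ <| by
          simp only [map_sub, map_sum, map_nsmul, habm, add_sub_cancel_left]
          exact sum_mem fun t _ => nsmul_mem (AddSubmonoid.subset_closure t.2) _
      simpa [map_sum, nsmul_eq_mul] using hf _ hmem
  exact ⟨g, fun b hb => g.nonneg_of_mem_closure (fun t ht => hgT ⟨t, ht⟩) hb,
    AddMonoidHom.eq_of_eqOn_dense hS fun s hs => hgS ⟨s, hs⟩⟩

theorem mem_of_forall_exists_nonneg_comp_eq [Module.Free ℤ G] (S : Finset G) (Q : AddSubmonoid H)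
    (h : G →+ H)
    (hsat : ∀ (n : ℕ) (x : G), 1 ≤ n → n • x ∈ AddSubmonoid.closure (S : Set G) →
      x ∈ AddSubmonoid.closure (S : Set G))
    (hsurj : ∀ f : G →+ ℝ, (∀ a ∈ AddSubmonoid.closure (S : Set G), 0 ≤ f a) →
      ∃ g : H →+ ℝ, (∀ b ∈ Q, 0 ≤ g b) ∧ g.comp h = f)
    {x : G} (hx : h x ∈ Q) : x ∈ AddSubmonoid.closure (S : Set G) := by
  rcases exists_nsmul_eq_sum_nsmul_or_exists_neg (fun s : S => (s : G)) x with
    ⟨N, hN, a, hNx⟩ | ⟨φ, hφS, hφx⟩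
  · refine hsat N x hN ?_
    rw [hNx]
    exact sum_mem fun s _ => nsmul_mem (AddSubmonoid.subset_closure s.2) _
  · obtain ⟨g, hgQ, hgφ⟩ := hsurj φ fun a ha => φ.nonneg_of_mem_closure (fun s hs => hφS ⟨s, hs⟩) ha
    have := hgQ _ hx
    rw [← AddMonoidHom.comp_apply, hgφ] at this
    exact absurd hφx this.not_gt

end Monoid

theorem stmt_6_general {G H : Type*} [AddCommGroup G] [AddCommGroup H]
    (P : AddSubmonoid G) (Q : AddSubmonoid H) (h : G →+ H)
    (hPfg : P.FG) (hQfg : Q.FG)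
    (hGgen : ∀ x : G, ∃ a ∈ P, ∃ b ∈ P, x = a - b)
    (hHgen : ∀ y : H, ∃ a ∈ Q, ∃ b ∈ Q, y = a - b)
    (hPsharp : ∀ u ∈ P, -u ∈ P → u = 0) (hQsharp : ∀ u ∈ Q, -u ∈ Q → u = 0)
    (hPsat : ∀ (n : ℕ) (x : G), 1 ≤ n → n • x ∈ P → x ∈ P)
    (hQsat : ∀ (n : ℕ) (y : H), 1 ≤ n → n • y ∈ Q → y ∈ Q) :
    (∀ x : G, h x ∈ Q → x ∈ P) ↔
      (∀ f : G →+ ℝ, (∀ a ∈ P, 0 ≤ f a) →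
        ∃ g : H →+ ℝ, (∀ b ∈ Q, 0 ≤ g b) ∧ g.comp h = f) := by
  have := isAddTorsionFree_of_sharp_of_saturated P hPsharp hPsat
  have := isAddTorsionFree_of_sharp_of_saturated Q hQsharp hQsat
  obtain ⟨S, rfl⟩ := hPfg
  obtain ⟨T, rfl⟩ := hQfg
  have hS := AddSubgroup.closure_eq_top_of_forall_eq_sub hGgen
  have hT := AddSubgroup.closure_eq_top_of_forall_eq_sub hHgen
  have : Module.Finite ℤ G := Module.Finite.iff_addGroup_fg.2 ⟨⟨S, hS⟩⟩
  have : Module.Finite ℤ H := Module.Finite.iff_addGroup_fg.2 ⟨⟨T, hT⟩⟩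
  exact ⟨fun hexact => exists_nonneg_comp_eq_of_exact S T h hS hexact,
    fun hsurj x => mem_of_forall_exists_nonneg_comp_eq S _ h hPsat hsurj⟩

/-- For a homomorphism `h : P → Q` of finitely generated,
integral, saturated, sharp monoids (modeled as submonoids of their
Grothendieck groups), `h` is exact if and only if the dual map of real cones
`φ : σ_Q → σ_P`, given by precomposition with `h`, is surjective.  A point of
`σ_P = Hom(P, ℝ≥0)` is modeled as `f : G →+ ℝ` with `f ≥ 0` on `P`. -/
theorem stmt_6 {G H : Type*} [AddCommGroup G] [AddCommGroup H]
    (P : AddSubmonoid G) (Q : AddSubmonoid H) (h : G →+ H)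
    (hPQ : ∀ x ∈ P, h x ∈ Q)
    (hPfg : P.FG) (hQfg : Q.FG)
    (hGgen : ∀ x : G, ∃ a ∈ P, ∃ b ∈ P, x = a - b)
    (hHgen : ∀ y : H, ∃ a ∈ Q, ∃ b ∈ Q, y = a - b)
    (hPsharp : ∀ u ∈ P, -u ∈ P → u = 0) (hQsharp : ∀ u ∈ Q, -u ∈ Q → u = 0)
    (hPsat : ∀ (n : ℕ) (x : G), 1 ≤ n → n • x ∈ P → x ∈ P)
    (hQsat : ∀ (n : ℕ) (y : H), 1 ≤ n → n • y ∈ Q → y ∈ Q) :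
    (∀ x : G, h x ∈ Q → x ∈ P) ↔
      (∀ f : G →+ ℝ, (∀ a ∈ P, 0 ≤ f a) →
        ∃ g : H →+ ℝ, (∀ b ∈ Q, 0 ≤ g b) ∧ g.comp h = f) :=
  stmt_6_general P Q h hPfg hQfg hGgen hHgen hPsharp hQsharp hPsat hQsat
end

section
/- The inclusion h : P ↪ Q, where Q = ℕx + ℕy + ℕ(z−x) + ℕ(z−y) inside ℤx + ℤy + ℤz and P = ℕx + ℕy, is exact but not integral: one has h(x) + (z−x) = h(y) + (z−y), but there exist no x₃, x₄ ∈ P and q ∈ Q with z−x = h(x₃) + q, z−y = h(x₄) + q and x + x₃ = y + x₄. -/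
/-!
Write elements of `ℤx + ℤy + ℤz` as `(a, b, c)`. `P` is cut out of `P^gp = ℤx + ℤy` by
`a, b ≥ 0`, and `Q` lies in the cone `a + c, b + c, a + b + c ≥ 0`, which on `c = 0` is just
`a, b ≥ 0`: hence exactness.
The functional `a + b + c` is nonnegative on `Q` and vanishes on `z - x`, so in
`z - x = x₃ + q` it must vanish on `x₃ ∈ P`, forcing `x₃ = 0`; but `x + x₃ = y + x₄` needs
a positive `y`-coordinate in `x₃`.
-/

/-- `P = ℕx + ℕy` inside `ℤx + ℤy + ℤz`, with `x = (1,0,0)`, `y = (0,1,0)`. -/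
def P7 : AddSubmonoid (ℤ × ℤ × ℤ) :=
  AddSubmonoid.closure {(1, 0, 0), (0, 1, 0)}

/-- `Q = ℕx + ℕy + ℕ(z-x) + ℕ(z-y)` inside `ℤx + ℤy + ℤz`. -/
def Q7 : AddSubmonoid (ℤ × ℤ × ℤ) :=
  AddSubmonoid.closure {(1, 0, 0), (0, 1, 0), (-1, 0, 1), (0, -1, 1)}

lemma mem_P7_iff {p : ℤ × ℤ × ℤ} : p ∈ P7 ↔ 0 ≤ p.1 ∧ 0 ≤ p.2.1 ∧ p.2.2 = 0 := by
  constructor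
  · intro hp
    induction hp using AddSubmonoid.closure_induction with
    | mem x hx =>
      rcases hx with rfl | rfl <;> simp
    | zero => simp
    | add x y _ _ hx hy =>
      simp only [Prod.fst_add, Prod.snd_add]
      omega
  · obtain ⟨a, b, c⟩ := p
    rintro ⟨ha, hb, rfl : c = 0⟩
    have hx : ((1, 0, 0) : ℤ × ℤ × ℤ) ∈ P7 := AddSubmonoid.subset_closure (by simp)
    have hy : ((0, 1, 0) : ℤ × ℤ × ℤ) ∈ P7 := AddSubmonoid.subset_closure (by simp)
    have hsum : ((a, b, 0) : ℤ × ℤ × ℤ) =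
        a.toNat • (1, 0, 0) + b.toNat • ((0, 1, 0) : ℤ × ℤ × ℤ) := by
      simp [ha, hb]
    rw [hsum]
    exact add_mem (nsmul_mem hx _) (nsmul_mem hy _)

lemma Q7_nonneg {p : ℤ × ℤ × ℤ} (hp : p ∈ Q7) :
    0 ≤ p.1 + p.2.2 ∧ 0 ≤ p.2.1 + p.2.2 ∧ 0 ≤ p.1 + p.2.1 + p.2.2 := by
  induction hp using AddSubmonoid.closure_induction with
  | mem x hx =>
    rcases hx with rfl | rfl | rfl | rfl <;> simp
  | zero => simp
  | add x y _ _ hx hy =>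
    simp only [Prod.fst_add, Prod.snd_add]
    omega

/-- The inclusion `P ↪ Q` is exact (every element of
`P^gp = {(a,b,0)}` lying in `Q` lies in `P`) but not integral:
`x + (z-x) = y + (z-y)`, yet there are no `x₃, x₄ ∈ P`, `q ∈ Q` with
`z-x = x₃ + q`, `z-y = x₄ + q` and `x + x₃ = y + x₄`. -/
theorem stmt_7 :
    (∀ a b : ℤ, ((a, b, 0) : ℤ × ℤ × ℤ) ∈ Q7 → ((a, b, 0) : ℤ × ℤ × ℤ) ∈ P7) ∧
    (((1, 0, 0) : ℤ × ℤ × ℤ) + (-1, 0, 1) = ((0, 1, 0) : ℤ × ℤ × ℤ) + (0, -1, 1)) ∧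
    ¬ ∃ x₃ ∈ P7, ∃ x₄ ∈ P7, ∃ q ∈ Q7,
        ((-1, 0, 1) : ℤ × ℤ × ℤ) = x₃ + q ∧ ((0, -1, 1) : ℤ × ℤ × ℤ) = x₄ + q ∧
        ((1, 0, 0) : ℤ × ℤ × ℤ) + x₃ = ((0, 1, 0) : ℤ × ℤ × ℤ) + x₄ := by
  refine ⟨fun a b hab => ?_, by norm_num, ?_⟩
  · obtain ⟨ha, hb, -⟩ := Q7_nonneg hab
    exact mem_P7_iff.mpr ⟨by simpa using ha, by simpa using hb, rfl⟩
  · rintro ⟨x₃, h₃, x₄, h₄, q, hq, hzx, -, hxy⟩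
    rw [mem_P7_iff] at h₃ h₄
    have hq_sum := (Q7_nonneg hq).2.2
    simp only [Prod.ext_iff, Prod.fst_add, Prod.snd_add] at hzx hxy
    omega
end

section
/- Let h : P → Q be an integral homomorphism of fine, saturated, sharp monoids, and assume h is local (hence injective). Then for every q ∈ Q^gp, the set P_{≤q} = { x ∈ P^gp : h^gp(x) ≤ q } (where a ≤ b in Q^gp means b − a ∈ Q) is either empty or has a maximum element. -/
/-!
Integrality makes the solution set `{x : q - h x ∈ Q}` directed for the order given by `P`. Since
`Q` is finitely generated, `ℚ[Q]` is noetherian, so among the monomial ideals `(q - h x)` there is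
a maximal one, i.e. a solution `m` with `q - h m` minimal for divisibility in `Q`. Any solution
`x` has a common upper bound `z ≥ m, x`; minimality and sharpness of `Q` force `h (z - m) = 0`,
and locality gives `z = m`, so `m ≥ x`.
-/

open AddMonoidAlgebra in
theorem AddMonoid.exists_minimal_of_fg {M : Type*} [AddCommMonoid M] [AddMonoid.FG M]
    {ι : Type*} [Nonempty ι] (f : ι → M) :
    ∃ i, ∀ j, (∃ c, f i = c + f j) → ∃ d, f j = d + f i := by
  have := Algebra.FiniteType.isNoetherianRing ℚ (AddMonoidAlgebra ℚ M)
  let I : ι → Ideal (AddMonoidAlgebra ℚ M) := fun i => Ideal.span (of' ℚ M '' {f i})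
  obtain ⟨_, ⟨i, rfl⟩, hmax⟩ :=
    set_has_maximal_iff_noetherian.mpr inferInstance (Set.range I) (Set.range_nonempty I)
  refine ⟨i, fun j ⟨c, hc⟩ => ?_⟩
  have hle : I i ≤ I j := by
    rw [Ideal.span_le, Set.image_singleton, Set.singleton_subset_iff, hc, of'_apply,
      ← mul_one (1 : ℚ), ← single_mul_single]
    exact Ideal.mul_mem_left _ _ (Ideal.subset_span ⟨f j, rfl, of'_apply _⟩)
  have hj : of' ℚ M (f j) ∈ I i :=
    (eq_of_le_of_not_lt hle (hmax _ ⟨j, rfl⟩)).symm ▸ Ideal.subset_span ⟨f j, rfl, rfl⟩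
  obtain ⟨_, rfl, d, hd⟩ := mem_ideal_span_of'_image.mp hj (f j) (by simp [of'_apply])
  exact ⟨d, hd⟩

namespace AddMonoidHom

variable {G H : Type*} [AddCommGroup G] [AddCommGroup H]

/-- Kato's equational criterion for integrality of `h : P → Q`. -/
def IsIntegralOn (h : G →+ H) (P : AddSubmonoid G) (Q : AddSubmonoid H) : Prop :=
  ∀ x₁ ∈ P, ∀ x₂ ∈ P, ∀ y₁ ∈ Q, ∀ y₂ ∈ Q, h x₁ + y₁ = h x₂ + y₂ →
    ∃ x₃ ∈ P, ∃ x₄ ∈ P, ∃ y ∈ Q, y₁ = h x₃ + y ∧ y₂ = h x₄ + y ∧ x₁ + x₃ = x₂ + x₄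

theorem IsIntegralOn.exists_upper_bound {h : G →+ H} {P : AddSubmonoid G} {Q : AddSubmonoid H}
    (hint : h.IsIntegralOn P Q) (hGgen : ∀ x : G, ∃ a ∈ P, ∃ b ∈ P, x = a - b) {q : H}
    {x₁ x₂ : G} (h₁ : q - h x₁ ∈ Q) (h₂ : q - h x₂ ∈ Q) :
    ∃ z, q - h z ∈ Q ∧ z - x₁ ∈ P ∧ z - x₂ ∈ P := by
  obtain ⟨a, ha, b, hb, hab⟩ := hGgen (x₁ - x₂)
  obtain rfl : a = x₁ - x₂ + b := by rw [hab]; abel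
  have key : h (x₁ - x₂ + b) + (q - h x₁) = h b + (q - h x₂) := by
    simp only [map_add, map_sub]
    abel
  obtain ⟨x₃, hx₃, x₄, hx₄, y, hy, hy₁, -, hsum⟩ := hint _ ha b hb _ h₁ _ h₂ key
  refine ⟨x₁ + x₃, ?_, by simpa using hx₃, ?_⟩
  · rwa [map_add, sub_add_eq_sub_sub, hy₁, add_sub_cancel_left]
  · convert hx₄ using 1
    rw [← add_right_inj b, ← hsum]
    abel

end AddMonoidHom

theorem stmt_9_general {G H : Type*} [AddCommGroup G] [AddCommGroup H]
    (P : AddSubmonoid G) (Q : AddSubmonoid H) (h : G →+ H)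
    (hPQ : ∀ x ∈ P, h x ∈ Q)
    (hQfg : Q.FG)
    (hGgen : ∀ x : G, ∃ a ∈ P, ∃ b ∈ P, x = a - b)
    (hQsharp : ∀ u ∈ Q, -u ∈ Q → u = 0)
    (hloc : ∀ x ∈ P, h x = 0 → x = 0)
    (hint : ∀ x₁ ∈ P, ∀ x₂ ∈ P, ∀ y₁ ∈ Q, ∀ y₂ ∈ Q, h x₁ + y₁ = h x₂ + y₂ →
      ∃ x₃ ∈ P, ∃ x₄ ∈ P, ∃ y ∈ Q,
        y₁ = h x₃ + y ∧ y₂ = h x₄ + y ∧ x₁ + x₃ = x₂ + x₄) :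
    ∀ q : H, (∃ x : G, q - h x ∈ Q) →
      ∃ m : G, q - h m ∈ Q ∧ ∀ x : G, q - h x ∈ Q → m - x ∈ P := by
  rintro q ⟨x₀, hx₀⟩
  have : AddMonoid.FG Q := (AddMonoid.fg_iff_addSubmonoid_fg Q).mpr hQfg
  have : Nonempty {x // q - h x ∈ Q} := ⟨⟨x₀, hx₀⟩⟩
  obtain ⟨⟨m, hm⟩, hmin⟩ :=
    AddMonoid.exists_minimal_of_fg fun x : {x // q - h x ∈ Q} => (⟨q - h x, x.2⟩ : Q)
  refine ⟨m, hm, fun x hx => ?_⟩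
  obtain ⟨z, hz, hzm, hzx⟩ := AddMonoidHom.IsIntegralOn.exists_upper_bound hint hGgen hm hx
  obtain ⟨d, hd⟩ := hmin ⟨z, hz⟩ ⟨⟨h (z - m), hPQ _ hzm⟩, by ext; simp⟩
  have hd' : (d : H) = -h (z - m) := by
    have hval : q - h z = d + (q - h m) := congrArg Subtype.val hd
    rw [eq_sub_of_add_eq hval.symm, map_sub]
    abel
  have hzm0 : h (z - m) = 0 := hQsharp _ (hPQ _ hzm) (hd' ▸ d.2)
  rwa [sub_eq_zero.mp (hloc _ hzm hzm0)] at hzx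

/-- Let `h : P → Q` be an integral, local homomorphism of fine,
saturated, sharp monoids (modeled as submonoids of their Grothendieck groups
`G = P^gp`, `H = Q^gp`).  Then for every `q ∈ Q^gp`, the set
`P_{≤q} = {x ∈ P^gp : h^gp x ≤ q}` (where `a ≤ b` in `Q^gp` means `b - a ∈ Q`)
is either empty or has a maximum element (for the order `a ≤ b ↔ b - a ∈ P`). -/
theorem stmt_9 {G H : Type*} [AddCommGroup G] [AddCommGroup H]
    (P : AddSubmonoid G) (Q : AddSubmonoid H) (h : G →+ H)
    (hPQ : ∀ x ∈ P, h x ∈ Q)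
    (hPfg : P.FG) (hQfg : Q.FG)
    (hGgen : ∀ x : G, ∃ a ∈ P, ∃ b ∈ P, x = a - b)
    (hHgen : ∀ y : H, ∃ a ∈ Q, ∃ b ∈ Q, y = a - b)
    (hPsharp : ∀ u ∈ P, -u ∈ P → u = 0) (hQsharp : ∀ u ∈ Q, -u ∈ Q → u = 0)
    (hPsat : ∀ (n : ℕ) (x : G), 1 ≤ n → n • x ∈ P → x ∈ P)
    (hQsat : ∀ (n : ℕ) (y : H), 1 ≤ n → n • y ∈ Q → y ∈ Q)
    (hloc : ∀ x ∈ P, h x = 0 → x = 0)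
    (hint : ∀ x₁ ∈ P, ∀ x₂ ∈ P, ∀ y₁ ∈ Q, ∀ y₂ ∈ Q, h x₁ + y₁ = h x₂ + y₂ →
      ∃ x₃ ∈ P, ∃ x₄ ∈ P, ∃ y ∈ Q,
        y₁ = h x₃ + y ∧ y₂ = h x₄ + y ∧ x₁ + x₃ = x₂ + x₄) :
    ∀ q : H, (∃ x : G, q - h x ∈ Q) →
      ∃ m : G, q - h m ∈ Q ∧ ∀ x : G, q - h x ∈ Q → m - x ∈ P :=
  stmt_9_general P Q h hPQ hQfg hGgen hQsharp hloc hint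
end

section
/- Conversely, let h : P → Q be a local homomorphism of fine, saturated, sharp monoids such that for every q ∈ Q^gp, the set P_{≤q} = { x ∈ P^gp : h^gp(x) ≤ q } is either empty or has a maximum. Then h is integral (satisfies Kato's equational criterion). -/
/-- Conversely, let `h : P → Q` be a local homomorphism of fine,
saturated, sharp monoids (modeled as submonoids of their Grothendieck groups)
such that for every `q ∈ Q^gp` the set `P_{≤q} = {x ∈ P^gp : h^gp x ≤ q}` is
either empty or has a maximum.  Then `h` is integral (Kato's equational
criterion holds). -/
theorem stmt_10 {G H : Type*} [AddCommGroup G] [AddCommGroup H]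
    (P : AddSubmonoid G) (Q : AddSubmonoid H) (h : G →+ H)
    (hPQ : ∀ x ∈ P, h x ∈ Q)
    (hPfg : P.FG) (hQfg : Q.FG)
    (hGgen : ∀ x : G, ∃ a ∈ P, ∃ b ∈ P, x = a - b)
    (hHgen : ∀ y : H, ∃ a ∈ Q, ∃ b ∈ Q, y = a - b)
    (hPsharp : ∀ u ∈ P, -u ∈ P → u = 0) (hQsharp : ∀ u ∈ Q, -u ∈ Q → u = 0)
    (hPsat : ∀ (n : ℕ) (x : G), 1 ≤ n → n • x ∈ P → x ∈ P)
    (hQsat : ∀ (n : ℕ) (y : H), 1 ≤ n → n • y ∈ Q → y ∈ Q)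
    (hloc : ∀ x ∈ P, h x = 0 → x = 0)
    (hmax : ∀ q : H, (∃ x : G, q - h x ∈ Q) →
      ∃ m : G, q - h m ∈ Q ∧ ∀ x : G, q - h x ∈ Q → m - x ∈ P) :
    ∀ x₁ ∈ P, ∀ x₂ ∈ P, ∀ y₁ ∈ Q, ∀ y₂ ∈ Q, h x₁ + y₁ = h x₂ + y₂ →
      ∃ x₃ ∈ P, ∃ x₄ ∈ P, ∃ y ∈ Q,
        y₁ = h x₃ + y ∧ y₂ = h x₄ + y ∧ x₁ + x₃ = x₂ + x₄ := by
  intro x₁ hx₁ x₂ hx₂ y₁ hy₁ y₂ hy₂ heq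
  set q : H := h x₁ + y₁ with hq
  have h1 : q - h x₁ ∈ Q := by simpa [hq] using hy₁
  have h2 : q - h x₂ ∈ Q := by rw [heq]; simpa using hy₂
  obtain ⟨m, hm, hmax'⟩ := hmax q ⟨x₁, h1⟩
  refine ⟨m - x₁, hmax' x₁ h1, m - x₂, hmax' x₂ h2, q - h m, hm, ?_, ?_, ?_⟩
  · rw [map_sub, hq]; abel
  · rw [map_sub, heq]; abel
  · abel
end

section
/- Let h : P → Q be an integral homomorphism of fine, saturated, sharp monoids. Then for each q ∈ Q^gp, the set P_{≤q} = { x ∈ P^gp : h^gp(x) ≤ q } is either empty or (upward) filtered: any two elements have a common upper bound in P_{≤q}. -/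
/-- Let `h : P → Q` be an integral homomorphism of fine,
saturated, sharp monoids (modeled as submonoids of their Grothendieck groups).
Then for each `q ∈ Q^gp`, the set `P_{≤q} = {x ∈ P^gp : h^gp x ≤ q}` is either
empty or upward filtered: any two elements have a common upper bound in
`P_{≤q}` (order `a ≤ b ↔ b - a ∈ P`). -/
theorem stmt_11 {G H : Type*} [AddCommGroup G] [AddCommGroup H]
    (P : AddSubmonoid G) (Q : AddSubmonoid H) (h : G →+ H)
    (hPQ : ∀ x ∈ P, h x ∈ Q)
    (hPfg : P.FG) (hQfg : Q.FG)
    (hGgen : ∀ x : G, ∃ a ∈ P, ∃ b ∈ P, x = a - b)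
    (hHgen : ∀ y : H, ∃ a ∈ Q, ∃ b ∈ Q, y = a - b)
    (hPsharp : ∀ u ∈ P, -u ∈ P → u = 0) (hQsharp : ∀ u ∈ Q, -u ∈ Q → u = 0)
    (hPsat : ∀ (n : ℕ) (x : G), 1 ≤ n → n • x ∈ P → x ∈ P)
    (hQsat : ∀ (n : ℕ) (y : H), 1 ≤ n → n • y ∈ Q → y ∈ Q)
    (hint : ∀ x₁ ∈ P, ∀ x₂ ∈ P, ∀ y₁ ∈ Q, ∀ y₂ ∈ Q, h x₁ + y₁ = h x₂ + y₂ →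
      ∃ x₃ ∈ P, ∃ x₄ ∈ P, ∃ y ∈ Q,
        y₁ = h x₃ + y ∧ y₂ = h x₄ + y ∧ x₁ + x₃ = x₂ + x₄) :
    ∀ q : H, ∀ x₁ : G, q - h x₁ ∈ Q → ∀ x₂ : G, q - h x₂ ∈ Q →
      ∃ x₃ : G, q - h x₃ ∈ Q ∧ x₃ - x₁ ∈ P ∧ x₃ - x₂ ∈ P := by
  intro q x₁ hy₁ x₂ hy₂
  obtain ⟨a, ha, b, hb, hab⟩ := hGgen (x₂ - x₁)
  have hba : b - a + x₂ - x₁ = 0 := by rw [show x₂ = a - b + x₁ by rw [← sub_eq_iff_eq_add, hab]]; abel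
  have h' : h b - h a + h x₂ - h x₁ = 0 := by
    rw [← map_sub, ← map_add, ← map_sub, hba, map_zero]
  have key : h b + (q - h x₁) = h a + (q - h x₂) := by
    rw [← sub_eq_zero, show h b + (q - h x₁) - (h a + (q - h x₂)) = h b - h a + h x₂ - h x₁ from by abel, h']
  obtain ⟨p, hp, p', hp', y, hy, e₁, e₂, e₃⟩ :=
    hint b hb a ha (q - h x₁) hy₁ (q - h x₂) hy₂ key
  refine ⟨x₁ + p, ?_, ?_, ?_⟩
  · have : q - h (x₁ + p) = y := by
      rw [map_add, show q - (h x₁ + h p) = (q - h x₁) - h p from by abel, e₁]; abel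
    rw [this]; exact hy
  · simpa using hp
  · have : x₁ + p - x₂ = p' := by
      rw [show x₂ = a - b + x₁ by rw [← sub_eq_iff_eq_add, hab],
        show x₁ + p - (a - b + x₁) = b + p - a from by abel, e₃]; abel
    rw [this]; exact hp'
end

section
/- Let h : P → Q be an exact and quasisaturated homomorphism of finitely generated, integral, sharp monoids. Then every monoid homomorphism P → ℕ factors through Q (i.e., there exists a homomorphism Q → ℕ whose composite with h is the given map). -/
/-!
Let `S` be a finite generating set of `Q`. Adjoining the elements of `S` one at a time, we extend
`f` to a functional `F` on a group `W ⊇ G` mapping onto more and more of `H` by some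
`Φ : W →+ H` extending `h`, keeping `F ≥ 0` on `Φ⁻¹ Q` together with the inequality

  `Φ w + n • z ∈ Q → ∃ w', Φ w' + z ∈ Q ∧ n * F w' ≤ F w`  (`n ≥ 1`),

which holds for `(h, f)` by exactness and quasisaturation. A new generator `y` is sent to
`-min {F w | Φ w + y ∈ Q}`; the minimum exists because, by Dickson's lemma, a strictly
decreasing sequence of values would contain two indices `i < j` with `Φ (w j - w i) ∈ Q`. The
inequality above is what keeps the extension nonnegative on positive multiples of `y`, and it
propagates to the extension. Once every generator is adjoined `Φ` is onto, and nonnegativity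
forces `F` to vanish on `ker Φ`, so `F` descends to the required `g : H →+ ℤ`.
-/

universe u

section

variable {G H : Type*} {W : Type u} [AddCommGroup G] [AddCommGroup H] [AddCommGroup W]

theorem AddSubmonoid.FG.exists_lt_sub_mem {Q : AddSubmonoid H} (hQ : Q.FG) {q : ℕ → H}
    (hq : ∀ i, q i ∈ Q) : ∃ i j, i < j ∧ q j - q i ∈ Q := by
  obtain ⟨S, rfl⟩ := hQ
  choose ν hν using fun i => AddSubmonoid.mem_closure_finset'.1 (hq i)
  obtain ⟨i, j, hij, hle⟩ := wellQuasiOrdered_le ν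
  have hsub : q j - q i = ∑ s : S, (ν j s - ν i s) • (s : H) := by
    rw [hν i, hν j, ← Finset.sum_sub_distrib]
    exact Finset.sum_congr rfl fun s _ => by rw [sub_nsmul _ (hle s), sub_eq_add_neg]
  exact ⟨i, j, hij, hsub ▸ _root_.sum_mem fun s _ => nsmul_mem (subset_closure s.2) _⟩

structure Admissible (Q : AddSubmonoid H) (Φ : W →+ H) (F : W →+ ℤ) : Prop where
  nonneg : ∀ w, Φ w ∈ Q → 0 ≤ F w
  exists_le_of_add_nsmul_mem : ∀ n : ℕ, 1 ≤ n → ∀ w z, Φ w + n • z ∈ Q →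
    ∃ w', Φ w' + z ∈ Q ∧ n * F w' ≤ F w

variable {Q : AddSubmonoid H} {Φ : W →+ H} {F : W →+ ℤ}

theorem admissible_of_exact_of_quasisaturated {P : AddSubmonoid G} {h : G →+ H} {f : G →+ ℤ}
    (hexact : ∀ x : G, h x ∈ Q → x ∈ P)
    (hqs : ∀ (n : ℕ), 1 ≤ n → ∀ (x : G) (y : H), h x + n • y ∈ Q →
      ∃ p ∈ P, ∃ q ∈ Q, ∃ t : G, x = p + n • t ∧ y = q - h t)
    (hf : ∀ a ∈ P, 0 ≤ f a) : Admissible Q h f where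
  nonneg x hx := hf x (hexact x hx)
  exists_le_of_add_nsmul_mem n hn x y hxy := by
    obtain ⟨p, hp, q, hq, t, rfl, rfl⟩ := hqs n hn x y hxy
    refine ⟨t, by simpa using hq, ?_⟩
    have := hf p hp
    simp only [map_add, map_nsmul, nsmul_eq_mul]
    linarith

theorem exists_forall_le_of_fg (hQ : Q.FG) (hF : ∀ w, Φ w ∈ Q → 0 ≤ F w) (y : H) :
    ∃ M, ∀ w, Φ w + y ∈ Q → M ≤ F w := by
  by_contra! hunbdd
  choose c hcQ hcF using hunbdd
  let u : ℕ → W := fun i => Nat.rec (c 0) (fun _ w => c (F w)) i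
  have huQ : ∀ i, Φ (u i) + y ∈ Q := fun i => by cases i <;> exact hcQ _
  have hanti : StrictAnti (F ∘ u) := strictAnti_nat_of_succ_lt fun i => hcF _
  obtain ⟨i, j, hij, hmem⟩ := hQ.exists_lt_sub_mem huQ
  have hle := hF (u j - u i) (by simpa [map_sub] using hmem)
  have hlt : F (u j) < F (u i) := hanti hij
  rw [map_sub] at hle
  omega

theorem exists_min_of_fg (hQ : Q.FG) (hF : ∀ w, Φ w ∈ Q → 0 ≤ F w) {y : H} (hy : y ∈ Q) :
    ∃ w₀, Φ w₀ + y ∈ Q ∧ ∀ w, Φ w + y ∈ Q → F w₀ ≤ F w := by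
  obtain ⟨M, hM⟩ := exists_forall_le_of_fg hQ hF y
  obtain ⟨_, ⟨w₀, hw₀, rfl⟩, hmin⟩ := Int.exists_least_of_bdd
    (P := fun a => ∃ w, Φ w + y ∈ Q ∧ F w = a)
    ⟨M, by rintro _ ⟨w, hw, rfl⟩; exact hM w hw⟩ ⟨F 0, 0, by simpa using hy, rfl⟩
  exact ⟨w₀, hw₀, fun w hw => hmin _ ⟨w, hw, rfl⟩⟩

theorem Admissible.coprod (hΦF : Admissible Q Φ F) {y : H} {w₀ : W} (hw₀ : Φ w₀ + y ∈ Q)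
    (hmin : ∀ w, Φ w + y ∈ Q → F w₀ ≤ F w) :
    Admissible Q (Φ.coprod (zmultiplesHom H y)) (F.coprod (zmultiplesHom ℤ (-F w₀))) where
  nonneg := by
    rintro ⟨w, m⟩ hmem
    simp only [AddMonoidHom.coprod_apply, zmultiplesHom_apply, smul_eq_mul] at hmem ⊢
    -- write `m = p - k` with `p ≥ 1`, `k ≥ 0` and move `k` copies of `(w₀, 1)` into `w`
    obtain ⟨k, p, hp, hkp⟩ : ∃ k p : ℕ, 1 ≤ p ∧ (p : ℤ) = m + k :=
      ⟨(1 - m).toNat, (m + (1 - m).toNat).toNat, by omega, by omega⟩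
    have hmem' : Φ (w + k • w₀) + p • y ∈ Q := by
      convert add_mem hmem (nsmul_mem hw₀ k) using 1
      rw [map_add, map_nsmul]
      linear_combination (norm := module) hkp • y
    obtain ⟨w', hw', hle⟩ := hΦF.exists_le_of_add_nsmul_mem p hp _ _ hmem'
    have hle' : (p : ℤ) * F w₀ ≤ p * F w' := mul_le_mul_of_nonneg_left (hmin w' hw') (by omega)
    rw [map_add, map_nsmul, nsmul_eq_mul, hkp] at hle
    rw [hkp] at hle'
    linarith
  exists_le_of_add_nsmul_mem := by
    rintro n hn ⟨w, m⟩ z hmem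
    simp only [AddMonoidHom.coprod_apply, zmultiplesHom_apply, smul_eq_mul] at hmem ⊢
    -- choose `a` with `n * a ≥ m` and move `n * a - m` copies of `(w₀, 1)` into `w`
    obtain ⟨a, k, hk⟩ : ∃ (a : ℤ) (k : ℕ), (k : ℤ) = n * a - m :=
      ⟨m.natAbs, (n * m.natAbs - m).toNat,
        Int.toNat_of_nonneg (by nlinarith [Int.le_natAbs (a := m)])⟩
    have hmem' : Φ (w + k • w₀) + n • (a • y + z) ∈ Q := by
      convert add_mem hmem (nsmul_mem hw₀ k) using 1
      rw [map_add, map_nsmul]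
      linear_combination (norm := module) hk.symm • y
    obtain ⟨w', hw', hle⟩ := hΦF.exists_le_of_add_nsmul_mem n hn _ _ hmem'
    refine ⟨(w', a), by simpa [add_assoc] using hw', ?_⟩
    rw [map_add, map_nsmul, nsmul_eq_mul] at hle
    linear_combination hle + F w₀ * hk

theorem Admissible.exists_coprod (hQ : Q.FG) (hΦF : Admissible Q Φ F) {y : H} (hy : y ∈ Q) :
    ∃ γ : ℤ, Admissible Q (Φ.coprod (zmultiplesHom H y)) (F.coprod (zmultiplesHom ℤ γ)) := by
  obtain ⟨w₀, hw₀, hmin⟩ := exists_min_of_fg hQ hΦF.nonneg hy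
  exact ⟨_, hΦF.coprod hw₀ hmin⟩

theorem Admissible.exists_extension (hQ : Q.FG) (hΦF : Admissible Q Φ F) (s : Finset H)
    (hs : (s : Set H) ⊆ Q) :
    ∃ (W' : Type u) (_ : AddCommGroup W') (ι : W →+ W') (Φ' : W' →+ H) (F' : W' →+ ℤ),
      Admissible Q Φ' F' ∧ Φ'.comp ι = Φ ∧ F'.comp ι = F ∧ (s : Set H) ⊆ Set.range Φ' := by
  classical
  induction s using Finset.induction_on with
  | empty => exact ⟨W, inferInstance, .id W, Φ, F, hΦF, rfl, rfl, by simp⟩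
  | insert y s _ ih =>
    rw [Finset.coe_insert, Set.insert_subset_iff] at hs
    obtain ⟨W', _, ι, Φ', F', hΦF', rfl, rfl, hrange⟩ := ih hs.2
    obtain ⟨γ, hγ⟩ := hΦF'.exists_coprod hQ hs.1
    refine ⟨W' × ℤ, inferInstance, (AddMonoidHom.inl W' ℤ).comp ι, _, _, hγ, ?_, ?_, ?_⟩
    · rw [← AddMonoidHom.comp_assoc, AddMonoidHom.coprod_comp_inl]
    · rw [← AddMonoidHom.comp_assoc, AddMonoidHom.coprod_comp_inl]
    · rw [Finset.coe_insert, Set.insert_subset_iff]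
      refine ⟨⟨(0, 1), by simp⟩, fun x hx => ?_⟩
      obtain ⟨w, rfl⟩ := hrange hx
      exact ⟨(w, 0), by simp⟩

theorem exists_comp_eq_of_surjective (hΦ : Function.Surjective Φ) (hF : ∀ w, Φ w ∈ Q → 0 ≤ F w) :
    ∃ g : H →+ ℤ, (∀ b ∈ Q, 0 ≤ g b) ∧ g.comp Φ = F := by
  have hker : Φ.ker ≤ F.ker := fun u hu => by
    have hΦu : Φ u = 0 := AddMonoidHom.mem_ker.1 hu
    have h₁ := hF u (by simp [hΦu])
    have h₂ := hF (-u) (by simp [hΦu])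
    rw [map_neg] at h₂
    exact AddMonoidHom.mem_ker.2 (by omega)
  set g := Φ.liftOfSurjective hΦ ⟨F, hker⟩
  have hg : g.comp Φ = F := Φ.liftOfRightInverse_comp _ _ ⟨F, hker⟩
  refine ⟨g, fun b hb => ?_, hg⟩
  obtain ⟨w, rfl⟩ := hΦ b
  exact (DFunLike.congr_fun hg w).symm ▸ hF w hb

end

theorem stmt_14_general {G H : Type*} [AddCommGroup G] [AddCommGroup H]
    (P : AddSubmonoid G) (Q : AddSubmonoid H) (h : G →+ H)
    (hQfg : Q.FG)
    (hHgen : ∀ y : H, ∃ a ∈ Q, ∃ b ∈ Q, y = a - b)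
    (hexact : ∀ x : G, h x ∈ Q → x ∈ P)
    (hqs : ∀ (n : ℕ), 1 ≤ n → ∀ (x : G) (y : H), h x + n • y ∈ Q →
      ∃ p ∈ P, ∃ q ∈ Q, ∃ t : G, x = p + n • t ∧ y = q - h t) :
    ∀ f : G →+ ℤ, (∀ a ∈ P, 0 ≤ f a) →
      ∃ g : H →+ ℤ, (∀ b ∈ Q, 0 ≤ g b) ∧ g.comp h = f := by
  intro f hf
  have ⟨S, hS⟩ := hQfg
  obtain ⟨W, _, ι, Φ, F, hΦF, rfl, rfl, hrange⟩ :=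
    (admissible_of_exact_of_quasisaturated hexact hqs hf).exists_extension hQfg S
      (hS ▸ AddSubmonoid.subset_closure)
  have hQ : Q ≤ AddMonoidHom.mrange Φ := hS ▸ AddSubmonoid.closure_le.2 hrange
  have hΦ : Function.Surjective Φ := fun y => by
    obtain ⟨a, ha, b, hb, rfl⟩ := hHgen y
    obtain ⟨wa, rfl⟩ := hQ ha
    obtain ⟨wb, rfl⟩ := hQ hb
    exact ⟨wa - wb, map_sub Φ wa wb⟩
  obtain ⟨g, hg, hgΦ⟩ := exists_comp_eq_of_surjective hΦ hΦF.nonneg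
  exact ⟨g, hg, by rw [← AddMonoidHom.comp_assoc, hgΦ]⟩

/-- Let `h : P → Q` be an exact and quasisaturated homomorphism
of finitely generated, integral, sharp monoids (modeled as submonoids of their
Grothendieck groups `G = P^gp`, `H = Q^gp`).  Then every monoid homomorphism
`P → ℕ` (modeled as `f : G →+ ℤ` nonnegative on `P`) factors through `Q`.

Quasisaturation is encoded concretely: for every `n ≥ 1`, the canonical map
`h' : Q'ₙ → Q` from the integral pushout `Q'ₙ` of `h` along `[n] : P → P` is
exact; identifying `(Q'ₙ)^gp = (G ⊕ H)/⟨(n•x, -h x)⟩` and `h'(x, y) = h x + n•y`,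
this means: whenever `h x + n • y ∈ Q`, the class of `(x, y)` lies in the
submonoid generated by `P` and `Q`, i.e. there are `p ∈ P`, `q ∈ Q`, `t : G`
with `x = p + n • t` and `y = q - h t`. -/
theorem stmt_14 {G H : Type*} [AddCommGroup G] [AddCommGroup H]
    (P : AddSubmonoid G) (Q : AddSubmonoid H) (h : G →+ H)
    (hPQ : ∀ x ∈ P, h x ∈ Q)
    (hPfg : P.FG) (hQfg : Q.FG)
    (hGgen : ∀ x : G, ∃ a ∈ P, ∃ b ∈ P, x = a - b)
    (hHgen : ∀ y : H, ∃ a ∈ Q, ∃ b ∈ Q, y = a - b)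
    (hPsharp : ∀ u ∈ P, -u ∈ P → u = 0) (hQsharp : ∀ u ∈ Q, -u ∈ Q → u = 0)
    (hexact : ∀ x : G, h x ∈ Q → x ∈ P)
    (hqs : ∀ (n : ℕ), 1 ≤ n → ∀ (x : G) (y : H), h x + n • y ∈ Q →
      ∃ p ∈ P, ∃ q ∈ Q, ∃ t : G, x = p + n • t ∧ y = q - h t) :
    ∀ f : G →+ ℤ, (∀ a ∈ P, 0 ≤ f a) →
      ∃ g : H →+ ℤ, (∀ b ∈ Q, 0 ≤ g b) ∧ g.comp h = f :=
  stmt_14_general P Q h hQfg hHgen hexact hqs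
end

section
/- Let P be a fine, saturated, sharp monoid dual to a cone σ, and let E be an equivariant (i.e., P^gp-graded) locally free module over k[P] of finite rank. Then E splits equivariantly as a direct sum of rank-one graded free modules: there is a finite multiset u₁, …, u_r ∈ P^gp and an isomorphism of graded k[P]-modules E ≅ ⊕ᵢ x^{-uᵢ} k[P]. -/
/-!
Fix a minimal finite set of homogeneous generators `e i` of `E`, of degrees `d i`. Homogeneous
parts of a relation `∑ fᵢ eᵢ = 0` are again relations, and by minimality no relation has a
coefficient with nonzero degree-`0` part (that part would be a unit of `k[P]`). As `E` is
projective, there are relations `r i` with `f = ∑ fᵢ rᵢ` for every relation `f`; for a homogeneous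
relation this reads `f = f B`, with `B i j` the degree-`(d i - d j)` part of `r i j`. So `B i j = 0`
unless `d i - d j ∈ P \ {0}`, and as `P` is sharp, `B` is strictly triangular, forcing `f = 0`.
-/

open AddMonoidAlgebra DirectSum Submodule

namespace Klyachko

section LinearAlgebra

variable {ι R M : Type*} [Fintype ι]

lemma mem_span_image_ne_of_sum_smul_eq_zero [Ring R] [AddCommGroup M] [Module R M]
    {v : ι → M} {g : ι → R} (hg : ∑ j, g j • v j = 0) {i : ι} (hi : IsUnit (g i)) :
    v i ∈ span R (v '' {j | j ≠ i}) := by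
  classical
  rw [← Finset.add_sum_erase _ _ (Finset.mem_univ i), add_eq_zero_iff_eq_neg] at hg
  rw [← smul_mem_iff_of_isUnit _ hi, hg]
  refine neg_mem (sum_mem fun j hj => smul_mem _ _ (subset_span ⟨j, ?_, rfl⟩))
  exact Finset.ne_of_mem_erase hj

lemma exists_ker_generators_of_projective [DecidableEq ι] [CommRing R] [AddCommGroup M]
    [Module R M] [Module.Projective R M] {v : ι → M} (hspan : span R (Set.range v) = ⊤) :
    ∃ r : ι → ι → R, (∀ i, r i ∈ LinearMap.ker (Fintype.linearCombination R v)) ∧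
      ∀ f ∈ LinearMap.ker (Fintype.linearCombination R v), f = ∑ i, f i • r i := by
  set φ := Fintype.linearCombination R v
  have hφ : Function.Surjective φ := by
    rwa [← LinearMap.range_eq_top, Fintype.range_linearCombination]
  obtain ⟨s, hs⟩ := Module.projective_lifting_property φ LinearMap.id hφ
  have hφs : ∀ x, φ (s x) = x := LinearMap.congr_fun hs
  refine ⟨fun i => Pi.single i 1 - s (v i), fun i => ?_, fun f hf => ?_⟩
  · rw [LinearMap.mem_ker, map_sub, hφs, Fintype.linearCombination_apply_single, one_smul,
      sub_self]
  · have hsf : ∑ i, f i • s (v i) = 0 := by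
      rw [LinearMap.mem_ker, Fintype.linearCombination_apply] at hf
      simp only [← map_smul, ← map_sum, hf, map_zero]
    simp only [smul_sub, Finset.sum_sub_distrib, hsf, sub_zero]
    ext j
    simp [Finset.sum_apply, Pi.single_apply]

lemma eq_zero_of_eq_sum_mul_of_wellFounded [NonUnitalNonAssocSemiring R] {r : ι → ι → Prop}
    (hr : WellFounded r) {B : ι → ι → R} (hB : ∀ i j, B i j ≠ 0 → r i j) {f : ι → R}
    (hf : ∀ j, f j = ∑ i, f i * B i j) : f = 0 := by
  funext j
  induction j using hr.induction with
  | _ j ih =>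
    rw [hf j, Pi.zero_apply]
    refine Finset.sum_eq_zero fun i _ => ?_
    by_cases h : B i j = 0
    · rw [h, mul_zero]
    · rw [ih i (hB i j h), Pi.zero_apply, zero_mul]

end LinearAlgebra

lemma wellFounded_sub_mem_and_ne {G ι : Type*} [AddCommGroup G] [Finite ι] {P : AddSubmonoid G}
    (hsharp : ∀ u ∈ P, -u ∈ P → u = 0) (d : ι → G) :
    WellFounded fun i j => d i - d j ∈ P ∧ d i ≠ d j := by
  refine @Finite.wellFounded_of_trans_of_irrefl _ _ _
    ⟨fun i j l hij hjl => ⟨?_, fun h => ?_⟩⟩ ⟨fun i h => h.2 rfl⟩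
  · simpa using P.add_mem hij.1 hjl.1
  · rw [h] at hij
    refine hij.2 (sub_eq_zero.mp (hsharp _ hij.1 ?_))
    simpa using hjl.1

section MonoidAlgebra

variable {R G : Type*} [AddCommGroup G] {P : AddSubmonoid G}

lemma eq_zero_of_mem_gradeBy_of_notMem [CommSemiring R] {g : G} {a : R[P]}
    (ha : a ∈ gradeBy R P.subtype g) (hg : g ∉ P) : a = 0 := by
  by_contra h
  obtain ⟨p, hp⟩ := a.coeff.support_nonempty_iff.mpr (AddMonoidAlgebra.coeff_eq_zero.not.mpr h)
  exact hg (ha p hp ▸ p.2)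

lemma isUnit_of_mem_gradeBy_zero [Field R] {a : R[P]}
    (ha : a ∈ gradeBy R P.subtype 0) (h : a ≠ 0) : IsUnit a := by
  have hsupp : a.coeff.support ⊆ {(0 : P)} := fun p hp =>
    Finset.mem_singleton.mpr (Subtype.ext (ha p hp))
  obtain ⟨c, hc⟩ := Finsupp.support_subset_singleton'.mp hsupp
  have ha' : a = single 0 c := AddMonoidAlgebra.coeff_inj.mp hc
  have hc0 : c ≠ 0 := by rintro rfl; simp_all
  refine isUnit_iff_exists_inv.mpr ⟨single 0 c⁻¹, ?_⟩
  rw [ha', single_mul_single, add_zero, mul_inv_cancel₀ hc0, AddMonoidAlgebra.one_def]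

end MonoidAlgebra

section GradedModule

variable {R G E : Type*} [CommSemiring R] [AddCommGroup G] [DecidableEq G] {P : AddSubmonoid G}
  [AddCommGroup E] [Module R[P] E]
  (ℰ : G → AddSubgroup E) [Decomposition ℰ]

lemma decompose_smul_of_mem
    (hcompat : ∀ (p : P) (c : R) (g : G), ∀ x ∈ ℰ g,
      (AddMonoidAlgebra.single p c : R[P]) • x ∈ ℰ ((p : G) + g))
    {g : G} {x : E} (hx : x ∈ ℰ g) (a : R[P]) (δ : G) :
    (decompose ℰ (a • x) δ : E) =
      (decompose (gradeBy R P.subtype) a (δ - g) : R[P]) • x := by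
  induction a using AddMonoidAlgebra.induction_linear with
  | zero => simp only [zero_smul, decompose_zero, DirectSum.zero_apply, ZeroMemClass.coe_zero]
  | add a b ha hb =>
    simp only [add_smul, decompose_add, DirectSum.add_apply, AddMemClass.coe_add, ha, hb]
  | single p c =>
    have hpx := hcompat p c g x hx
    have hp : single p c ∈ gradeBy R P.subtype (p : G) := single_mem_gradeBy _ _ _
    by_cases h : (p : G) + g = δ
    · subst h
      rw [decompose_of_mem_same _ hpx, add_sub_cancel_right, decompose_of_mem_same _ hp]
    · rw [decompose_of_mem_ne _ hpx h, decompose_of_mem_ne _ hp (h <| · ▸ sub_add_cancel δ g),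
        zero_smul]

lemma exists_finset_homogeneous_span_eq_top [Module.Finite R[P] E] :
    ∃ T : Finset E, (∀ x ∈ T, ∃ g, x ∈ ℰ g) ∧ span R[P] (T : Set E) = ⊤ := by
  have hH : span R[P] (⋃ g, (ℰ g : Set E)) = ⊤ := by
    refine eq_top_iff'.mpr fun x => ?_
    induction x using Decomposition.inductionOn ℰ with
    | zero => exact zero_mem _
    | homogeneous m => exact subset_span (Set.mem_iUnion_of_mem _ m.2)
    | add x y hx hy => exact add_mem hx hy
  obtain ⟨T, hTH, hT⟩ := (fg_span_iff_fg_span_finset_subset _).mp (hH ▸ Module.Finite.fg_top)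
  exact ⟨T, fun x hx => Set.mem_iUnion.mp (hTH hx), hT ▸ hH⟩

end GradedModule

section Splitting

variable {k G E ι : Type*} [Field k] [AddCommGroup G] [DecidableEq G] {P : AddSubmonoid G}
  [AddCommGroup E] [Module k[P] E]
  (ℰ : G → AddSubgroup E) [Decomposition ℰ]
  (hcompat : ∀ (p : P) (c : k) (g : G), ∀ x ∈ ℰ g,
      (AddMonoidAlgebra.single p c : k[P]) • x ∈ ℰ ((p : G) + g))
  [Fintype ι] {e : ι → E} {d : ι → G}

local notation "𝒜" => gradeBy k P.subtype
local notation "φ" => Fintype.linearCombination k[P] e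

/-- The degree-`δ` part of `f`, in the grading of `ι → k[P]` where the `i`-th basis vector has
degree `d i`. -/
noncomputable def homogeneousPart (d : ι → G) (δ : G) (f : ι → k[P]) : ι → k[P] :=
  fun i => decompose 𝒜 (f i) (δ - d i)

include hcompat in
lemma decompose_linearCombination (he : ∀ i, e i ∈ ℰ (d i)) (f : ι → k[P]) (δ : G) :
    (decompose ℰ (φ f) δ : E) = φ (homogeneousPart d δ f) := by
  simp only [Fintype.linearCombination_apply, decompose_sum, DirectSum.sum_apply,
    AddSubgroup.val_finsetSum, decompose_smul_of_mem ℰ hcompat (he _), homogeneousPart]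

include hcompat in
lemma homogeneousPart_mem_ker (he : ∀ i, e i ∈ ℰ (d i)) {f : ι → k[P]}
    (hf : f ∈ LinearMap.ker φ) (δ : G) : homogeneousPart d δ f ∈ LinearMap.ker φ := by
  rw [LinearMap.mem_ker, ← decompose_linearCombination ℰ hcompat he, LinearMap.mem_ker.mp hf,
    decompose_zero, DirectSum.zero_apply, ZeroMemClass.coe_zero]

include hcompat in
lemma decompose_apply_zero_eq_zero_of_mem_ker (he : ∀ i, e i ∈ ℰ (d i))
    (hmin : ∀ i, e i ∉ span k[P] (e '' {j | j ≠ i}))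
    {f : ι → k[P]} (hf : f ∈ LinearMap.ker φ) (i : ι) :
    decompose 𝒜 (f i) 0 = 0 := by
  by_contra h
  refine hmin i (mem_span_image_ne_of_sum_smul_eq_zero (g := homogeneousPart d (d i) f) ?_ ?_)
  · exact homogeneousPart_mem_ker ℰ hcompat he hf (d i)
  · rw [homogeneousPart, sub_self]
    exact isUnit_of_mem_gradeBy_zero (Submodule.coe_mem _) fun h' => h (Subtype.ext h')

include hcompat in
lemma eq_zero_of_mem_ker_of_forall_mem_gradeBy [DecidableEq ι]
    [Module.Projective k[P] E] (hsharp : ∀ u ∈ P, -u ∈ P → u = 0)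
    (he : ∀ i, e i ∈ ℰ (d i)) (hspan : span k[P] (Set.range e) = ⊤)
    (hmin : ∀ i, e i ∉ span k[P] (e '' {j | j ≠ i}))
    {δ : G} {f : ι → k[P]} (hf : f ∈ LinearMap.ker φ)
    (hδ : ∀ i, f i ∈ 𝒜 (δ - d i)) : f = 0 := by
  obtain ⟨r, hr, hker⟩ := exists_ker_generators_of_projective hspan
  let B i j : k[P] := homogeneousPart d (d i) (r i) j
  have hB : ∀ i j, B i j ≠ 0 → d i - d j ∈ P ∧ d i ≠ d j := by
    intro i j hij
    refine ⟨by_contra fun hP => hij (eq_zero_of_mem_gradeBy_of_notMem (Submodule.coe_mem _) hP),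
      fun hd => hij ?_⟩
    simp only [B, homogeneousPart]
    rw [hd, sub_self, decompose_apply_zero_eq_zero_of_mem_ker ℰ hcompat he hmin (hr i) j,
      ZeroMemClass.coe_zero]
  refine eq_zero_of_eq_sum_mul_of_wellFounded (wellFounded_sub_mem_and_ne hsharp d) hB fun j => ?_
  calc f j = decompose 𝒜 (f j) (δ - d j) := (decompose_of_mem_same _ (hδ j)).symm
    _ = decompose 𝒜 (∑ i, f i * r i j) (δ - d j) := by
      conv_lhs => rw [hker f hf]
      simp [Finset.sum_apply]
    _ = ∑ i, f i * B i j := by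
      simp only [decompose_sum, DirectSum.sum_apply, Submodule.coe_sum]
      refine Finset.sum_congr rfl fun i _ => ?_
      rw [← sub_add_sub_cancel δ (d i) (d j), coe_decompose_mul_add_of_left_mem _ (hδ i)]
      rfl

include hcompat in
lemma linearIndependent_of_forall_notMem_span [DecidableEq ι]
    [Module.Projective k[P] E] (hsharp : ∀ u ∈ P, -u ∈ P → u = 0)
    (he : ∀ i, e i ∈ ℰ (d i)) (hspan : span k[P] (Set.range e) = ⊤)
    (hmin : ∀ i, e i ∉ span k[P] (e '' {j | j ≠ i})) :
    LinearIndependent k[P] e := by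
  refine Fintype.linearIndependent_iff.mpr fun f hf j => (decompose 𝒜).injective ?_
  ext q : 1
  have hpart := eq_zero_of_mem_ker_of_forall_mem_gradeBy ℰ hcompat hsharp he hspan hmin
    (homogeneousPart_mem_ker ℰ hcompat he hf (q + d j)) fun i => Submodule.coe_mem _
  have := congrFun hpart j
  simp only [homogeneousPart, Pi.zero_apply] at this
  rw [add_sub_cancel_right] at this
  rw [decompose_zero, DirectSum.zero_apply]
  exact Subtype.ext this

include hcompat in
lemma exists_homogeneous_basis [Module.Projective k[P] E]
    (hsharp : ∀ u ∈ P, -u ∈ P → u = 0) (T : Finset E) (hT : ∀ x ∈ T, ∃ g, x ∈ ℰ g)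
    (hspan : span k[P] (T : Set E) = ⊤) :
    ∃ (r : ℕ) (u : Fin r → G) (b : Module.Basis (Fin r) k[P] E),
      ∀ i, b i ∈ ℰ (u i) := by
  classical
  induction T using Finset.strongInduction with
  | H T ih =>
  by_cases hred : ∃ x ∈ T, x ∈ span k[P] (T.erase x : Set E)
  · obtain ⟨x, hx, hxT⟩ := hred
    refine ih _ (Finset.erase_ssubset hx) (fun y hy => hT y (Finset.mem_of_mem_erase hy)) ?_
    rwa [← span_insert_eq_span hxT, ← Finset.coe_insert, Finset.insert_erase hx]
  · push Not at hred
    choose d hd using hT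
    have himage (x : T) : ((↑) : T → E) '' {j | j ≠ x} = ↑(T.erase ↑x) := by ext; aesop
    have hind := linearIndependent_of_forall_notMem_span ℰ hcompat hsharp
      (e := ((↑) : T → E)) (d := fun x => d x x.2) (fun x => hd x x.2)
      (by rwa [Subtype.range_coe_subtype]) fun x => himage x ▸ hred x x.2
    let b := (Module.Basis.mk hind (by simp [hspan])).reindex T.equivFin
    exact ⟨T.card, fun i => d _ (T.equivFin.symm i).2, b, fun i => by simpa [b] using hd _ _⟩

end Splitting

end Klyachko

theorem stmt_19_general {k : Type} [Field k] {G : Type} [AddCommGroup G] [DecidableEq G]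
    (P : AddSubmonoid G)
    (hsharp : ∀ u ∈ P, -u ∈ P → u = 0)
    {E : Type} [AddCommGroup E] [Module (AddMonoidAlgebra k P) E]
    (ℰ : G → AddSubgroup E)
    (hinternal : DirectSum.IsInternal ℰ)
    (hcompat : ∀ (p : P) (c : k) (g : G), ∀ x ∈ ℰ g,
      (AddMonoidAlgebra.single p c : AddMonoidAlgebra k P) • x ∈ ℰ ((p : G) + g))
    (hproj : Module.Projective (AddMonoidAlgebra k P) E)
    (hfin : Module.Finite (AddMonoidAlgebra k P) E) :
    ∃ (r : ℕ) (u : Fin r → G) (b : Module.Basis (Fin r) (AddMonoidAlgebra k P) E),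
      ∀ i, b i ∈ ℰ (u i) := by
  let _ := hinternal.chooseDecomposition
  obtain ⟨T, hT, hspan⟩ := Klyachko.exists_finset_homogeneous_span_eq_top (R := k) (P := P) ℰ
  exact Klyachko.exists_homogeneous_basis ℰ hcompat hsharp T hT hspan

/-- Klyachko's splitting theorem, affine case: Let `P` be a
fine, saturated, sharp monoid (a finitely generated submonoid with trivial
units of its Grothendieck group `G = P^gp`), `k` a field, and `E` a
`P^gp`-graded module over the monoid algebra `k[P]` (the grading is given by a
family `ℰ : G → AddSubgroup E` which is an internal direct sum decomposition
and satisfies `single p c • ℰ g ⊆ ℰ (p + g)`).  If `E` is locally free of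
finite rank (projective and finite over `k[P]`), then `E` splits equivariantly
as a direct sum of rank-one graded free modules: there is a finite multiset
`u₁, …, u_r ∈ P^gp` and a `k[P]`-basis of `E` consisting of homogeneous
elements of degrees `u₁, …, u_r` — i.e. a graded isomorphism
`E ≅ ⊕ᵢ x^{-uᵢ} k[P]`. -/
theorem stmt_19 {k : Type} [Field k] {G : Type} [AddCommGroup G] [DecidableEq G]
    (P : AddSubmonoid G) (hPfg : P.FG)
    (hsharp : ∀ u ∈ P, -u ∈ P → u = 0)
    (hsat : ∀ (n : ℕ) (x : G), 1 ≤ n → n • x ∈ P → x ∈ P)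
    (hGgen : ∀ x : G, ∃ a ∈ P, ∃ b ∈ P, x = a - b)
    {E : Type} [AddCommGroup E] [Module (AddMonoidAlgebra k P) E]
    (ℰ : G → AddSubgroup E)
    (hinternal : DirectSum.IsInternal ℰ)
    (hcompat : ∀ (p : P) (c : k) (g : G), ∀ x ∈ ℰ g,
      (AddMonoidAlgebra.single p c : AddMonoidAlgebra k P) • x ∈ ℰ ((p : G) + g))
    (hproj : Module.Projective (AddMonoidAlgebra k P) E)
    (hfin : Module.Finite (AddMonoidAlgebra k P) E) :
    ∃ (r : ℕ) (u : Fin r → G) (b : Module.Basis (Fin r) (AddMonoidAlgebra k P) E),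
      ∀ i, b i ∈ ℰ (u i) :=
  stmt_19_general P hsharp ℰ hinternal hcompat hproj hfin
end
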